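/- Let n ≥ 2 be an even natural number, 0 < Ω < 1, and ζ₀ > 0. Then the origin of the shifted even system is asymptotically stable: it is Lyapunov stable, and there exists l > 0 such that every solution x : [ζ₀, ∞) → ℝ² of the shifted even system with ‖x(ζ₀)‖ < l satisfies x₁(ζ) → 0 and x₂(ζ) → 0 as ζ → ∞. -/

import Mathlib

open Filter

/-- A solution on [ζ₀, ∞) of the shifted even system arising from the
generalized Lane–Emden equation with γ = 1 + 1/n: x₁′ = x₂,
x₂′ = (1/(n+1))·(Ω·(x₁ − Ω^{−1/n})ⁿ − 1) − 2x₂/ζ. -/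
def IsSolShiftedEven (n : ℕ) (Ω ζ₀ : ℝ) (x₁ x₂ : ℝ → ℝ) : Prop :=
  ∀ ζ ∈ Set.Ici ζ₀,
    HasDerivWithinAt x₁ (x₂ ζ) (Set.Ici ζ₀) ζ ∧
    HasDerivWithinAt x₂
      ((1 / ((n : ℝ) + 1)) * (Ω * (x₁ ζ - Ω ^ (-1 / (n : ℝ))) ^ n - 1)
        - 2 * x₂ ζ / ζ)
      (Set.Ici ζ₀) ζ

/-!
The shifted equation reads `x₁'' + (2 / ζ) x₁' + g(x₁) = 0`, where for `n` even and `Ω > 0` the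
nonlinearity `g` vanishes at `0` with `g'(0) > 0`. Near the origin `u g(u)` is then squeezed
between two positive multiples of `u²`, so the energy `E = x₂² / 2 + ∫₀^{x₁} g` is comparable to
`x₁² + x₂²`; since `E' = -2 x₂² / ζ ≤ 0`, this gives Lyapunov stability. For attraction, the
perturbed function `V = E + ε x₁ x₂ / ζ` satisfies `ζ V' ≤ -β V` for small `ε > 0`, so `ζ ^ β V`
is nonincreasing and `x₁² + x₂² = O(ζ ^ (-β))`.
-/

open Set Topology

theorem exists_sq_le_mul_le_sq_of_hasDerivAt {g : ℝ → ℝ} {k : ℝ} (hg : HasDerivAt g k 0)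
    (hg₀ : g 0 = 0) (hk : 0 < k) :
    ∃ r > 0, ∀ u, |u| ≤ r → k / 2 * u ^ 2 ≤ u * g u ∧ u * g u ≤ 3 * k / 2 * u ^ 2 := by
  obtain ⟨ε, hε, hball⟩ :=
    Metric.eventually_nhds_iff.mp ((hasDerivAt_iff_isLittleO.mp hg).def (half_pos hk))
  refine ⟨ε / 2, half_pos hε, fun u hu => ?_⟩
  have hlin : |g u - u * k| ≤ k / 2 * |u| := by
    simpa [hg₀] using hball (show dist u 0 < ε by rw [Real.dist_0_eq_abs]; linarith)
  have hquad : |u * g u - k * u ^ 2| ≤ k / 2 * u ^ 2 := by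
    calc |u * g u - k * u ^ 2| = |u| * |g u - u * k| := by rw [← abs_mul]; ring_nf
      _ ≤ |u| * (k / 2 * |u|) := mul_le_mul_of_nonneg_left hlin (abs_nonneg u)
      _ = k / 2 * u ^ 2 := by rw [← sq_abs u]; ring
  constructor <;> linarith [abs_le.mp hquad]

theorem half_mul_sq_le_of_hasDerivAt {F g : ℝ → ℝ} {a r u : ℝ} (hF : ∀ u, HasDerivAt F (g u) u)
    (hF₀ : F 0 = 0) (hg : ∀ u, |u| ≤ r → a * u ^ 2 ≤ u * g u) (hu : |u| ≤ r) :
    a / 2 * u ^ 2 ≤ F u := by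
  -- mean value theorem for `t ↦ F (t * u) - a / 2 * (t * u) ^ 2` on `[0, 1]`
  have hderiv : ∀ t, HasDerivAt (fun t => F (t * u) - a / 2 * (t * u) ^ 2)
      (u * g (t * u) - a * t * u ^ 2) t := fun t => by
    have hlin : HasDerivAt (fun t => t * u) u t := hasDerivAt_mul_const u
    refine (((hF (t * u)).comp t hlin).sub ((hlin.pow 2).const_mul (a / 2))).congr_deriv ?_
    ring
  obtain ⟨c, hc, hslope⟩ := exists_hasDerivAt_eq_slope _ _ zero_lt_one
    (fun t _ => (hderiv t).continuousAt.continuousWithinAt) (fun t _ => hderiv t)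
  have hcu : a * (c * u) ^ 2 ≤ c * u * g (c * u) := hg (c * u) (by
    rw [abs_mul, abs_of_pos hc.1]; nlinarith [abs_nonneg u, hc.2])
  have hpos : 0 ≤ u * g (c * u) - a * c * u ^ 2 := by nlinarith [hc.1]
  simp only [hF₀, zero_mul, one_mul, sub_zero, div_one] at hslope
  nlinarith [hc.1]

theorem intervalIntegral_sq_bounds {g : ℝ → ℝ} {k K r u : ℝ} (hg : Continuous g)
    (hgr : ∀ u, |u| ≤ r → k * u ^ 2 ≤ u * g u ∧ u * g u ≤ K * u ^ 2) (hu : |u| ≤ r) :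
    k / 2 * u ^ 2 ≤ ∫ t in (0 : ℝ)..u, g t ∧ ∫ t in (0 : ℝ)..u, g t ≤ K / 2 * u ^ 2 := by
  have hF : ∀ u, HasDerivAt (fun u => ∫ t in (0 : ℝ)..u, g t) (g u) u :=
    fun u => (hg.integral_hasStrictDerivAt 0 u).hasDerivAt
  refine ⟨half_mul_sq_le_of_hasDerivAt hF (by simp) (fun u hu => (hgr u hu).1) hu, ?_⟩
  have := half_mul_sq_le_of_hasDerivAt (fun u => (hF u).neg) (by simp) (a := -K)
    (fun u hu => by linarith [(hgr u hu).2]) hu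
  simp only [Pi.neg_apply] at this
  linarith

theorem abs_mul_div_le_sq_add_sq_div {a b ζ₀ ζ : ℝ} (hζ₀ : 0 < ζ₀) (hζ : ζ₀ ≤ ζ) :
    |a * b / ζ| ≤ (a ^ 2 + b ^ 2) / (2 * ζ₀) := by
  rw [abs_div, abs_of_pos (hζ₀.trans_le hζ), div_le_div_iff₀ (hζ₀.trans_le hζ) (by positivity)]
  have : 2 * |a * b| ≤ a ^ 2 + b ^ 2 := by
    rw [abs_mul]; nlinarith [sq_nonneg (|a| - |b|), sq_abs a, sq_abs b]
  nlinarith [abs_nonneg (a * b)]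

theorem antitoneOn_rpow_mul_of_hasDerivWithinAt {V V' : ℝ → ℝ} {ζ₀ β : ℝ} (hζ₀ : 0 < ζ₀)
    (hV : ∀ ζ ∈ Ici ζ₀, HasDerivWithinAt V (V' ζ) (Ici ζ₀) ζ)
    (hV' : ∀ ζ ∈ Ioi ζ₀, ζ * V' ζ ≤ -β * V ζ) :
    AntitoneOn (fun ζ => ζ ^ β * V ζ) (Ici ζ₀) := by
  have hpow : ∀ ζ ∈ Ici ζ₀, HasDerivAt (fun ζ : ℝ => ζ ^ β) (β * ζ ^ (β - 1)) ζ :=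
    fun ζ hζ => Real.hasDerivAt_rpow_const (Or.inl (hζ₀.trans_le hζ).ne')
  refine antitoneOn_of_hasDerivWithinAt_nonpos
    (f' := fun ζ => β * ζ ^ (β - 1) * V ζ + ζ ^ β * V' ζ) (convex_Ici ζ₀)
    (fun ζ hζ => ((hpow ζ hζ).hasDerivWithinAt.mul (hV ζ hζ)).continuousWithinAt)
    (fun ζ hζ => ?_) (fun ζ hζ => ?_) <;> rw [interior_Ici] at hζ
  · rw [interior_Ici]
    exact ((hpow ζ (mem_Ici_of_Ioi hζ)).hasDerivWithinAt.mul
      (hV ζ (mem_Ici_of_Ioi hζ))).mono Ioi_subset_Ici_self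
  · have hζpos : 0 < ζ := hζ₀.trans hζ
    have h := mul_le_mul_of_nonneg_left (hV' ζ hζ) (Real.rpow_nonneg hζpos.le β)
    have hsplit : β * ζ ^ (β - 1) * V ζ + ζ ^ β * V' ζ
        = (ζ ^ β * (β * V ζ) + ζ ^ β * (ζ * V' ζ)) / ζ := by
      rw [Real.rpow_sub_one hζpos.ne']; field_simp
    rw [hsplit]
    exact div_nonpos_of_nonpos_of_nonneg (by linarith) hζpos.le

theorem tendsto_zero_of_sq_add_sq {f h : ℝ → ℝ}
    (hfh : Tendsto (fun ζ => f ζ ^ 2 + h ζ ^ 2) atTop (𝓝 0)) : Tendsto f atTop (𝓝 0) := by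
  refine squeeze_zero_norm (fun ζ => ?_) (by simpa using hfh.sqrt)
  rw [Real.norm_eq_abs, ← Real.sqrt_sq_eq_abs]
  exact Real.sqrt_le_sqrt (le_add_of_nonneg_right (sq_nonneg _))

def IsSolDampedOscillator (g : ℝ → ℝ) (ζ₀ : ℝ) (x₁ x₂ : ℝ → ℝ) : Prop :=
  ∀ ζ ∈ Ici ζ₀,
    HasDerivWithinAt x₁ (x₂ ζ) (Ici ζ₀) ζ ∧
    HasDerivWithinAt x₂ (-g (x₁ ζ) - 2 * x₂ ζ / ζ) (Ici ζ₀) ζ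

def OriginIsAsymptoticallyStable (IsSol : (ℝ → ℝ) → (ℝ → ℝ) → Prop) (ζ₀ : ℝ) : Prop :=
  (∀ ε : ℝ, 0 < ε → ∃ δ : ℝ, 0 < δ ∧
      ∀ x₁ x₂ : ℝ → ℝ, IsSol x₁ x₂ →
        Real.sqrt (x₁ ζ₀ ^ 2 + x₂ ζ₀ ^ 2) < δ →
        ∀ ζ : ℝ, ζ₀ ≤ ζ → Real.sqrt (x₁ ζ ^ 2 + x₂ ζ ^ 2) < ε) ∧
    (∃ l : ℝ, 0 < l ∧
      ∀ x₁ x₂ : ℝ → ℝ, IsSol x₁ x₂ →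
        Real.sqrt (x₁ ζ₀ ^ 2 + x₂ ζ₀ ^ 2) < l →
        Tendsto x₁ atTop (nhds 0) ∧ Tendsto x₂ atTop (nhds 0))

noncomputable def dampedEnergy (g x₁ x₂ : ℝ → ℝ) (ζ : ℝ) : ℝ :=
  x₂ ζ ^ 2 / 2 + ∫ t in (0 : ℝ)..x₁ ζ, g t

noncomputable def dampedLyapunov (g x₁ x₂ : ℝ → ℝ) (ε ζ : ℝ) : ℝ :=
  dampedEnergy g x₁ x₂ ζ + ε * (x₁ ζ * x₂ ζ / ζ)

section DampedOscillator

variable {g x₁ x₂ : ℝ → ℝ} {ζ₀ : ℝ}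

theorem IsSolDampedOscillator.continuousOn_fst (hx : IsSolDampedOscillator g ζ₀ x₁ x₂) :
    ContinuousOn x₁ (Ici ζ₀) :=
  fun ζ hζ => (hx ζ hζ).1.continuousWithinAt

theorem hasDerivWithinAt_dampedEnergy (hg : Continuous g) (hx : IsSolDampedOscillator g ζ₀ x₁ x₂)
    {ζ : ℝ} (hζ : ζ ∈ Ici ζ₀) :
    HasDerivWithinAt (dampedEnergy g x₁ x₂) (-2 * x₂ ζ ^ 2 / ζ) (Ici ζ₀) ζ := by
  obtain ⟨h₁, h₂⟩ := hx ζ hζ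
  have hF := (hg.integral_hasStrictDerivAt 0 (x₁ ζ)).hasDerivAt.comp_hasDerivWithinAt ζ h₁
  exact (((h₂.pow 2).div_const 2).add hF).congr_deriv (by ring)

theorem antitoneOn_dampedEnergy (hg : Continuous g) (hζ₀ : 0 ≤ ζ₀)
    (hx : IsSolDampedOscillator g ζ₀ x₁ x₂) : AntitoneOn (dampedEnergy g x₁ x₂) (Ici ζ₀) := by
  refine antitoneOn_of_hasDerivWithinAt_nonpos (f' := fun ζ => -2 * x₂ ζ ^ 2 / ζ)
    (convex_Ici ζ₀) (fun ζ hζ => (hasDerivWithinAt_dampedEnergy hg hx hζ).continuousWithinAt)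
    (fun ζ hζ => ?_) (fun ζ hζ => ?_) <;> rw [interior_Ici] at hζ
  · rw [interior_Ici]
    exact (hasDerivWithinAt_dampedEnergy hg hx (mem_Ici_of_Ioi hζ)).mono Ioi_subset_Ici_self
  · exact div_nonpos_of_nonpos_of_nonneg (by nlinarith [sq_nonneg (x₂ ζ)])
      (hζ₀.trans (le_of_lt hζ))

theorem hasDerivWithinAt_dampedLyapunov (hg : Continuous g) (hζ₀ : 0 < ζ₀)
    (hx : IsSolDampedOscillator g ζ₀ x₁ x₂) (ε : ℝ) {ζ : ℝ} (hζ : ζ ∈ Ici ζ₀) :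
    HasDerivWithinAt (dampedLyapunov g x₁ x₂ ε)
      ((-(2 - ε) * x₂ ζ ^ 2 - ε * (x₁ ζ * g (x₁ ζ)) - 3 * ε * (x₁ ζ * x₂ ζ / ζ)) / ζ)
      (Ici ζ₀) ζ := by
  obtain ⟨h₁, h₂⟩ := hx ζ hζ
  have hζ0 : ζ ≠ 0 := (hζ₀.trans_le hζ).ne'
  have hcross := ((h₁.mul h₂).div (hasDerivWithinAt_id ζ _) hζ0).const_mul ε
  exact ((hasDerivWithinAt_dampedEnergy hg hx hζ).add hcross).congr_deriv (by
    simp only [id_eq, Pi.mul_apply]; field_simp; ring)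

theorem dampedLyapunov_deriv_bound {k ε ζ₀ ζ a b y : ℝ} (hζ₀ : 0 < ζ₀) (hζ : ζ₀ ≤ ζ)
    (hk : 0 < k) (hk₁ : k ≤ 1) (hε : 0 ≤ ε) (hε₁ : ε ≤ 1) (hε₉ : 9 * ε ≤ k * ζ₀ ^ 2)
    (hy : k * a ^ 2 ≤ y) :
    -(2 - ε) * b ^ 2 - ε * y - 3 * ε * (a * b / ζ) ≤ -(ε * k / 2) * (a ^ 2 + b ^ 2) := by
  have hζpos : 0 < ζ := hζ₀.trans_le hζ
  have hs : ζ₀ ^ 2 * (b / ζ) ^ 2 ≤ b ^ 2 := by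
    rw [div_pow, mul_div_assoc', div_le_iff₀ (by positivity), mul_comm (b ^ 2)]
    exact mul_le_mul_of_nonneg_right (pow_le_pow_left₀ hζ₀.le hζ 2) (sq_nonneg b)
  have hamgm : -(6 * k * ζ₀ ^ 2 * (a * (b / ζ))) ≤ k ^ 2 * ζ₀ ^ 2 * a ^ 2 + 9 * b ^ 2 := by
    nlinarith [sq_nonneg (k * ζ₀ * a + 3 * ζ₀ * (b / ζ))]
  have hcross : -(3 * ε * (a * b / ζ)) * (2 * k * ζ₀ ^ 2)
      ≤ (ε * k * a ^ 2 + b ^ 2) * (k * ζ₀ ^ 2) := by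
    rw [mul_div_assoc]
    nlinarith [mul_le_mul_of_nonneg_left hamgm hε, mul_le_mul_of_nonneg_right hε₉ (sq_nonneg b)]
  have hcross' : -(3 * ε * (a * b / ζ)) ≤ (ε * k * a ^ 2 + b ^ 2) / 2 := by
    rw [le_div_iff₀ two_pos]
    exact le_of_mul_le_mul_right (by linarith) (by positivity : 0 < k * ζ₀ ^ 2)
  nlinarith [mul_le_mul_of_nonneg_left hy hε, mul_le_mul_of_nonneg_right hε₁ (sq_nonneg b),
    mul_le_mul_of_nonneg_left hk₁ hε, sq_nonneg b]

variable {k K r : ℝ}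

theorem dampedEnergy_sq_bounds (hg : Continuous g) (hk₁ : k ≤ 1) (hK₁ : 1 ≤ K)
    (hgr : ∀ u, |u| ≤ r → k * u ^ 2 ≤ u * g u ∧ u * g u ≤ K * u ^ 2) {ζ : ℝ} (hζ : |x₁ ζ| ≤ r) :
    k / 2 * (x₁ ζ ^ 2 + x₂ ζ ^ 2) ≤ dampedEnergy g x₁ x₂ ζ ∧
      dampedEnergy g x₁ x₂ ζ ≤ K / 2 * (x₁ ζ ^ 2 + x₂ ζ ^ 2) := by
  obtain ⟨hlow, hup⟩ := intervalIntegral_sq_bounds hg hgr hζ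
  unfold dampedEnergy
  constructor <;> nlinarith [sq_nonneg (x₂ ζ)]

theorem abs_lt_of_dampedEnergy_lt (hg : Continuous g) (hζ₀ : 0 ≤ ζ₀)
    (hx : IsSolDampedOscillator g ζ₀ x₁ x₂) (hk : 0 < k) (hk₁ : k ≤ 1) (hK₁ : 1 ≤ K)
    (hgr : ∀ u, |u| ≤ r → k * u ^ 2 ≤ u * g u ∧ u * g u ≤ K * u ^ 2) {ρ : ℝ} (hρr : ρ ≤ r)
    (h₀ : |x₁ ζ₀| < ρ) (hE : dampedEnergy g x₁ x₂ ζ₀ < k / 2 * ρ ^ 2) :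
    ∀ ζ ∈ Ici ζ₀, |x₁ ζ| < ρ := by
  intro ζ hζ
  by_contra! hge
  obtain ⟨t, ht, hxt⟩ := intermediate_value_Icc hζ
    (hx.continuousOn_fst.mono Icc_subset_Ici_self).abs ⟨h₀.le, hge⟩
  have hxt : |x₁ t| = ρ := hxt
  have hEt := (dampedEnergy_sq_bounds (x₂ := x₂) hg hk₁ hK₁ hgr (hxt.le.trans hρr)).1
  have hanti := antitoneOn_dampedEnergy hg hζ₀ hx self_mem_Ici ht.1 ht.1
  have hsq : x₁ t ^ 2 = ρ ^ 2 := by rw [← sq_abs, hxt]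
  nlinarith [sq_nonneg (x₂ t)]

theorem sqrt_sq_add_sq_lt_of_sqrt_sq_add_sq_lt (hg : Continuous g) (hζ₀ : 0 ≤ ζ₀)
    (hx : IsSolDampedOscillator g ζ₀ x₁ x₂) (hk : 0 < k) (hk₁ : k ≤ 1) (hK₁ : 1 ≤ K)
    (hgr : ∀ u, |u| ≤ r → k * u ^ 2 ≤ u * g u ∧ u * g u ≤ K * u ^ 2) {ρ : ℝ} (hρ : 0 < ρ)
    (hρr : ρ ≤ r) (h₀ : √(x₁ ζ₀ ^ 2 + x₂ ζ₀ ^ 2) < √(k / K) * ρ) :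
    ∀ ζ ∈ Ici ζ₀, √(x₁ ζ ^ 2 + x₂ ζ ^ 2) < ρ := by
  have hK : 0 < K := one_pos.trans_le hK₁
  have h₀' : x₁ ζ₀ ^ 2 + x₂ ζ₀ ^ 2 < k / K * ρ ^ 2 := by
    rwa [Real.sqrt_lt' (by positivity), mul_pow, Real.sq_sqrt (by positivity)] at h₀
  have hkK : k / K * ρ ^ 2 ≤ ρ ^ 2 :=
    mul_le_of_le_one_left (sq_nonneg ρ) ((div_le_one hK).mpr (hk₁.trans hK₁))
  have hx₁₀ : |x₁ ζ₀| < ρ := abs_lt_of_sq_lt_sq (by nlinarith [sq_nonneg (x₂ ζ₀)]) hρ.le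
  have hE₀ : dampedEnergy g x₁ x₂ ζ₀ < k / 2 * ρ ^ 2 := by
    calc dampedEnergy g x₁ x₂ ζ₀ ≤ K / 2 * (x₁ ζ₀ ^ 2 + x₂ ζ₀ ^ 2) :=
          (dampedEnergy_sq_bounds hg hk₁ hK₁ hgr (hx₁₀.le.trans hρr)).2
      _ < K / 2 * (k / K * ρ ^ 2) := by gcongr
      _ = k / 2 * ρ ^ 2 := by field_simp
  intro ζ hζ
  have hx₁ := abs_lt_of_dampedEnergy_lt hg hζ₀ hx hk hk₁ hK₁ hgr hρr hx₁₀ hE₀ ζ hζ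
  have hlow := (dampedEnergy_sq_bounds (x₂ := x₂) hg hk₁ hK₁ hgr (hx₁.le.trans hρr)).1
  have hanti := antitoneOn_dampedEnergy hg hζ₀ hx self_mem_Ici hζ hζ
  rw [Real.sqrt_lt' hρ]
  nlinarith

theorem dampedLyapunov_sq_bounds (hg : Continuous g) (hζ₀ : 0 < ζ₀) (hk₁ : k ≤ 1) (hK₁ : 1 ≤ K)
    (hgr : ∀ u, |u| ≤ r → k * u ^ 2 ≤ u * g u ∧ u * g u ≤ K * u ^ 2) {ε : ℝ} (hε : 0 ≤ ε)
    (hεk : ε ≤ k * ζ₀ / 2) {ζ : ℝ} (hζ : ζ ∈ Ici ζ₀) (hx₁ : |x₁ ζ| ≤ r) :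
    k / 4 * (x₁ ζ ^ 2 + x₂ ζ ^ 2) ≤ dampedLyapunov g x₁ x₂ ε ζ ∧
      dampedLyapunov g x₁ x₂ ε ζ ≤ (K / 2 + ε / (2 * ζ₀)) * (x₁ ζ ^ 2 + x₂ ζ ^ 2) := by
  obtain ⟨hElow, hEup⟩ := dampedEnergy_sq_bounds (x₂ := x₂) hg hk₁ hK₁ hgr hx₁
  obtain ⟨hlow, hup⟩ := abs_le.mp (abs_mul_div_le_sq_add_sq_div (a := x₁ ζ) (b := x₂ ζ) hζ₀ hζ)
  have hεζ : ε / (2 * ζ₀) ≤ k / 4 := by rw [div_le_iff₀ (by positivity)]; linarith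
  have hq := add_nonneg (sq_nonneg (x₁ ζ)) (sq_nonneg (x₂ ζ))
  have hεq : ε * ((x₁ ζ ^ 2 + x₂ ζ ^ 2) / (2 * ζ₀))
      = ε / (2 * ζ₀) * (x₁ ζ ^ 2 + x₂ ζ ^ 2) := by ring
  unfold dampedLyapunov
  constructor
  · nlinarith [mul_le_mul_of_nonneg_left hlow hε, mul_le_mul_of_nonneg_right hεζ hq]
  · nlinarith [mul_le_mul_of_nonneg_left hup hε]

theorem tendsto_zero_of_forall_abs_le (hg : Continuous g) (hζ₀ : 0 < ζ₀)
    (hx : IsSolDampedOscillator g ζ₀ x₁ x₂) (hk : 0 < k) (hk₁ : k ≤ 1) (hK₁ : 1 ≤ K)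
    (hgr : ∀ u, |u| ≤ r → k * u ^ 2 ≤ u * g u ∧ u * g u ≤ K * u ^ 2)
    (hx₁ : ∀ ζ ∈ Ici ζ₀, |x₁ ζ| ≤ r) :
    Tendsto x₁ atTop (𝓝 0) ∧ Tendsto x₂ atTop (𝓝 0) := by
  obtain ⟨ε, hε, hε₁, hεk, hε₉⟩ :
      ∃ ε : ℝ, 0 < ε ∧ ε ≤ 1 ∧ ε ≤ k * ζ₀ / 2 ∧ 9 * ε ≤ k * ζ₀ ^ 2 :=
    ⟨min (min 1 (k * ζ₀ / 2)) (k * ζ₀ ^ 2 / 9), by positivity,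
      (min_le_left _ _).trans (min_le_left _ _), (min_le_left _ _).trans (min_le_right _ _),
      by linarith [min_le_right (min 1 (k * ζ₀ / 2)) (k * ζ₀ ^ 2 / 9)]⟩
  set V := dampedLyapunov g x₁ x₂ ε
  set C := K / 2 + ε / (2 * ζ₀)
  have hC : 0 < C := by have := one_pos.trans_le hK₁; positivity
  have hV_bounds : ∀ ζ ∈ Ici ζ₀,
      k / 4 * (x₁ ζ ^ 2 + x₂ ζ ^ 2) ≤ V ζ ∧ V ζ ≤ C * (x₁ ζ ^ 2 + x₂ ζ ^ 2) := fun ζ hζ =>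
    dampedLyapunov_sq_bounds hg hζ₀ hk₁ hK₁ hgr hε.le hεk hζ (hx₁ ζ hζ)
  set β := ε * k / 2 / C
  have hβ : 0 < β := by positivity
  have hdecay : AntitoneOn (fun ζ => ζ ^ β * V ζ) (Ici ζ₀) := by
    refine antitoneOn_rpow_mul_of_hasDerivWithinAt hζ₀
      (fun ζ hζ => hasDerivWithinAt_dampedLyapunov hg hζ₀ hx ε hζ) (fun ζ hζ => ?_)
    have hdV := dampedLyapunov_deriv_bound (b := x₂ ζ) hζ₀ (le_of_lt hζ) hk hk₁ hε.le hε₁ hε₉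
      (hgr _ (hx₁ ζ (mem_Ici_of_Ioi hζ))).1
    have hVC := mul_le_mul_of_nonneg_left (hV_bounds ζ (mem_Ici_of_Ioi hζ)).2 hβ.le
    have hβC : β * (C * (x₁ ζ ^ 2 + x₂ ζ ^ 2)) = ε * k / 2 * (x₁ ζ ^ 2 + x₂ ζ ^ 2) := by
      simp only [β]; field_simp
    rw [mul_div_cancel₀ _ (hζ₀.trans hζ).ne']
    linarith
  have hsq : Tendsto (fun ζ => x₁ ζ ^ 2 + x₂ ζ ^ 2) atTop (𝓝 0) := by
    refine squeeze_zero' (Eventually.of_forall fun ζ => by positivity)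
      ((eventually_ge_atTop ζ₀).mono fun ζ hζ => ?_)
      (by simpa only [mul_zero] using
        (tendsto_rpow_neg_atTop hβ).const_mul (4 / k * (ζ₀ ^ β * V ζ₀)))
    have hV : V ζ ≤ ζ₀ ^ β * V ζ₀ * ζ ^ (-β) := by
      rw [Real.rpow_neg (hζ₀.le.trans hζ), ← div_eq_mul_inv,
        le_div_iff₀ (Real.rpow_pos_of_pos (hζ₀.trans_le hζ) β), mul_comm]
      exact hdecay self_mem_Ici hζ hζ
    calc x₁ ζ ^ 2 + x₂ ζ ^ 2 ≤ 4 / k * V ζ := by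
          rw [div_mul_eq_mul_div, le_div_iff₀ hk]; linarith [(hV_bounds ζ hζ).1]
      _ ≤ 4 / k * (ζ₀ ^ β * V ζ₀ * ζ ^ (-β)) := by gcongr
      _ = 4 / k * (ζ₀ ^ β * V ζ₀) * ζ ^ (-β) := by ring
  exact ⟨tendsto_zero_of_sq_add_sq hsq,
    tendsto_zero_of_sq_add_sq (h := x₁) (by simpa only [add_comm] using hsq)⟩

theorem originIsAsymptoticallyStable_dampedOscillator (hg : Continuous g) (hg₀ : g 0 = 0)
    (hgk : HasDerivAt g k 0) (hk : 0 < k) (hζ₀ : 0 < ζ₀) :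
    OriginIsAsymptoticallyStable (IsSolDampedOscillator g ζ₀) ζ₀ := by
  obtain ⟨r, hr, hgr⟩ := exists_sq_le_mul_le_sq_of_hasDerivAt hgk hg₀ hk
  set k' := min (k / 2) 1
  set K' := max (3 * k / 2) 1
  have hk' : 0 < k' := lt_min (half_pos hk) one_pos
  have hgr' : ∀ u, |u| ≤ r → k' * u ^ 2 ≤ u * g u ∧ u * g u ≤ K' * u ^ 2 := fun u hu =>
    ⟨(mul_le_mul_of_nonneg_right (min_le_left _ _) (sq_nonneg u)).trans (hgr u hu).1,
      (hgr u hu).2.trans (mul_le_mul_of_nonneg_right (le_max_left _ _) (sq_nonneg u))⟩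
  have hstable := fun {x₁ x₂ : ℝ → ℝ} (hx : IsSolDampedOscillator g ζ₀ x₁ x₂) {ρ : ℝ}
      (hρ : 0 < ρ) (hρr : ρ ≤ r) =>
    sqrt_sq_add_sq_lt_of_sqrt_sq_add_sq_lt hg hζ₀.le hx hk' (min_le_right _ _)
      (le_max_right _ _) hgr' hρ hρr
  constructor
  · intro ε hε
    refine ⟨√(k' / K') * min ε r, by positivity, fun x₁ x₂ hx h₀ ζ hζ => ?_⟩
    exact (hstable hx (lt_min hε hr) (min_le_right ε r) h₀ ζ hζ).trans_le (min_le_left ε r)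
  · refine ⟨√(k' / K') * r, by positivity, fun x₁ x₂ hx h₀ => ?_⟩
    refine tendsto_zero_of_forall_abs_le hg hζ₀ hx hk' (min_le_right _ _) (le_max_right _ _)
      hgr' fun ζ hζ => ?_
    rw [← Real.sqrt_sq_eq_abs]
    exact (Real.sqrt_le_sqrt (le_add_of_nonneg_right (sq_nonneg (x₂ ζ)))).trans
      (hstable hx hr le_rfl h₀ ζ hζ).le

end DampedOscillator

noncomputable def laneEmdenForce (n : ℕ) (Ω u : ℝ) : ℝ :=
  1 / ((n : ℝ) + 1) * (1 - Ω * (u - Ω ^ (-1 / (n : ℝ))) ^ n)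

section LaneEmden

variable {n : ℕ} {Ω : ℝ}

theorem mul_rpow_neg_one_div_pow (hΩ : 0 < Ω) (hn : n ≠ 0) :
    Ω * (Ω ^ (-1 / (n : ℝ))) ^ n = 1 := by
  rw [← Real.rpow_natCast, ← Real.rpow_mul hΩ.le, div_mul_cancel₀ _ (Nat.cast_ne_zero.mpr hn),
    Real.rpow_neg_one, mul_inv_cancel₀ hΩ.ne']

theorem continuous_laneEmdenForce : Continuous (laneEmdenForce n Ω) := by
  unfold laneEmdenForce; fun_prop

theorem laneEmdenForce_zero (hne : Even n) (hn : n ≠ 0) (hΩ : 0 < Ω) :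
    laneEmdenForce n Ω 0 = 0 := by
  rw [laneEmdenForce, zero_sub, hne.neg_pow, mul_rpow_neg_one_div_pow hΩ hn, sub_self, mul_zero]

theorem hasDerivAt_laneEmdenForce_zero (hne : Even n) (hn : n ≠ 0) :
    HasDerivAt (laneEmdenForce n Ω)
      (Ω * n * (Ω ^ (-1 / (n : ℝ))) ^ (n - 1) / ((n : ℝ) + 1)) 0 := by
  have hodd : Odd (n - 1) := Nat.Even.sub_odd (Nat.one_le_iff_ne_zero.mpr hn) hne odd_one
  have h := ((((hasDerivAt_id (0 : ℝ)).sub_const (Ω ^ (-1 / (n : ℝ)))).pow n).const_mul Ω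
    |>.const_sub 1).const_mul (1 / ((n : ℝ) + 1))
  refine h.congr_deriv ?_
  simp only [id_eq, zero_sub, hodd.neg_pow]
  ring

theorem isSolShiftedEven_iff {ζ₀ : ℝ} {x₁ x₂ : ℝ → ℝ} :
    IsSolShiftedEven n Ω ζ₀ x₁ x₂ ↔ IsSolDampedOscillator (laneEmdenForce n Ω) ζ₀ x₁ x₂ := by
  have h : ∀ u v ζ : ℝ, 1 / ((n : ℝ) + 1) * (Ω * (u - Ω ^ (-1 / (n : ℝ))) ^ n - 1) - 2 * v / ζ
      = -laneEmdenForce n Ω u - 2 * v / ζ := fun u v ζ => by unfold laneEmdenForce; ring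
  simp only [IsSolShiftedEven, IsSolDampedOscillator, h]

end LaneEmden

theorem laneEmden_origin_asymptotically_stable_general
    (n : ℕ) (hn : 2 ≤ n) (hne : Even n) (Ω ζ₀ : ℝ)
    (hΩ : 0 < Ω) (hζ₀ : 0 < ζ₀) :
    (∀ ε : ℝ, 0 < ε → ∃ δ : ℝ, 0 < δ ∧
      ∀ x₁ x₂ : ℝ → ℝ, IsSolShiftedEven n Ω ζ₀ x₁ x₂ →
        Real.sqrt (x₁ ζ₀ ^ 2 + x₂ ζ₀ ^ 2) < δ →
        ∀ ζ : ℝ, ζ₀ ≤ ζ → Real.sqrt (x₁ ζ ^ 2 + x₂ ζ ^ 2) < ε) ∧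
    (∃ l : ℝ, 0 < l ∧
      ∀ x₁ x₂ : ℝ → ℝ, IsSolShiftedEven n Ω ζ₀ x₁ x₂ →
        Real.sqrt (x₁ ζ₀ ^ 2 + x₂ ζ₀ ^ 2) < l →
        Tendsto x₁ atTop (nhds 0) ∧ Tendsto x₂ atTop (nhds 0)) := by
  have hn₀ : n ≠ 0 := by omega
  simp only [isSolShiftedEven_iff]
  exact originIsAsymptoticallyStable_dampedOscillator continuous_laneEmdenForce
    (laneEmdenForce_zero hne hn₀ hΩ) (hasDerivAt_laneEmdenForce_zero hne hn₀) (by positivity) hζ₀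

/-- For n ≥ 2 even, 0 < Ω < 1 and ζ₀ > 0, the origin of the
shifted even system is asymptotically stable: it is Lyapunov stable, and some
l > 0 exists such that all solutions starting within Euclidean distance l of
the origin converge to the origin as ζ → ∞. -/
theorem laneEmden_origin_asymptotically_stable
    (n : ℕ) (hn : 2 ≤ n) (hne : Even n) (Ω ζ₀ : ℝ)
    (hΩ : 0 < Ω) (hΩ1 : Ω < 1) (hζ₀ : 0 < ζ₀) :
    (∀ ε : ℝ, 0 < ε → ∃ δ : ℝ, 0 < δ ∧
      ∀ x₁ x₂ : ℝ → ℝ, IsSolShiftedEven n Ω ζ₀ x₁ x₂ →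
        Real.sqrt (x₁ ζ₀ ^ 2 + x₂ ζ₀ ^ 2) < δ →
        ∀ ζ : ℝ, ζ₀ ≤ ζ → Real.sqrt (x₁ ζ ^ 2 + x₂ ζ ^ 2) < ε) ∧
    (∃ l : ℝ, 0 < l ∧
      ∀ x₁ x₂ : ℝ → ℝ, IsSolShiftedEven n Ω ζ₀ x₁ x₂ →
        Real.sqrt (x₁ ζ₀ ^ 2 + x₂ ζ₀ ^ 2) < l →
        Tendsto x₁ atTop (nhds 0) ∧ Tendsto x₂ atTop (nhds 0)) :=
  laneEmden_origin_asymptotically_stable_general n hn hne Ω ζ₀ hΩ hζ₀
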